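/- Let Z ~ N(θ, 1) be a univariate normal with variance 1, and let y > 0. Then the conditional expectation of Z given |Z| = y (i.e., given Z ∈ {−y, y}) satisfies θ·E[Z | Z ∈ {−y, y}] = θy·(e^{yθ} − e^{−yθ})/(e^{yθ} + e^{−yθ}) = θy·tanh(θy) ≥ 0. -/
import Mathlib


open Real

/-- Display (9): the conditional mean of Z ∼ N(θ,1) given Z ∈ {−y, y},
    multiplied by θ, equals θy·tanh(θy) ≥ 0.  Here φ is the N(0,1) density,
    so the density of Z at ±y is φ(±y − θ). -/
theorem stmt_9 (θ y : ℝ) (hy : 0 < y)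
    (φ : ℝ → ℝ) (hφ : ∀ t, φ t = Real.exp (-(t ^ 2) / 2) / Real.sqrt (2 * π)) :
    θ * ((y * φ (y - θ) + (-y) * φ (-y - θ)) / (φ (y - θ) + φ (-y - θ))) =
        θ * y * (Real.exp (y * θ) - Real.exp (-(y * θ))) /
          (Real.exp (y * θ) + Real.exp (-(y * θ))) ∧
    θ * ((y * φ (y - θ) + (-y) * φ (-y - θ)) / (φ (y - θ) + φ (-y - θ))) =
        θ * y * Real.tanh (θ * y) ∧
    0 ≤ θ * y * Real.tanh (θ * y) := by
  have hs : (0:ℝ) < Real.sqrt (2 * π) := Real.sqrt_pos.mpr (by positivity)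
  set c : ℝ := Real.exp (-(y ^ 2 + θ ^ 2) / 2) / Real.sqrt (2 * π) with hc
  have hcpos : 0 < c := by positivity
  have h1 : φ (y - θ) = c * Real.exp (y * θ) := by
    rw [hφ, hc, div_mul_eq_mul_div, ← Real.exp_add]
    ring_nf
  have h2 : φ (-y - θ) = c * Real.exp (-(y * θ)) := by
    rw [hφ, hc, div_mul_eq_mul_div, ← Real.exp_add]
    ring_nf
  have hea : 0 < Real.exp (y * θ) := Real.exp_pos _
  have heb : 0 < Real.exp (-(y * θ)) := Real.exp_pos _
  have hden : φ (y - θ) + φ (-y - θ) ≠ 0 := by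
    rw [h1, h2]; positivity
  have key : θ * ((y * φ (y - θ) + (-y) * φ (-y - θ)) / (φ (y - θ) + φ (-y - θ))) =
      θ * y * (Real.exp (y * θ) - Real.exp (-(y * θ))) /
        (Real.exp (y * θ) + Real.exp (-(y * θ))) := by
    rw [h1, h2, mul_div_assoc', div_eq_div_iff (by positivity) (by positivity)]
    ring
  refine ⟨key, ?_, ?_⟩
  · rw [key, Real.tanh_eq_sinh_div_cosh, Real.sinh_eq, Real.cosh_eq, mul_comm θ y]
    have hc2 : Real.exp (θ * y) + Real.exp (-(θ * y)) ≠ 0 := by positivity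
    field_simp
  · have hsc : Real.tanh (θ * y) = Real.sinh (θ * y) / Real.cosh (θ * y) :=
      Real.tanh_eq_sinh_div_cosh _
    rcases le_or_gt 0 (θ * y) with h | h
    · exact mul_nonneg h (by rw [hsc]; exact div_nonneg (Real.sinh_nonneg_iff.mpr h) (Real.cosh_pos _).le)
    · have ht : Real.tanh (θ * y) ≤ 0 := by
        rw [hsc]; exact div_nonpos_of_nonpos_of_nonneg (Real.sinh_nonpos_iff.mpr h.le) (Real.cosh_pos _).le
      nlinarith [mul_nonneg (neg_nonneg.2 h.le) (neg_nonneg.2 ht)]
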